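/- (Lemma: probability that a tile is created in the i-th iteration.) Let P ⊆ U be a finite set of n distinct points, let π : {1, …, n} → P be a uniformly random bijection, and for 0 ≤ j ≤ n set P_j = {π(1), …, π(j)}. Then for every subset f ⊆ U and every 1 ≤ i ≤ n, Pr[f is a tile of QT(P_i) and f is not a tile of QT(P_{i−1})] ≤ (4 / i) · Pr[f is a tile of QT(P_i)]. -/

import Mathlib

/-- The unit square `U = [0,1) × [0,1)`. -/
def unitSq : Set (ℝ × ℝ) := Set.Ico (0 : ℝ) 1 ×ˢ Set.Ico (0 : ℝ) 1

/-- The square `[i/2^k, (i+1)/2^k) × [j/2^k, (j+1)/2^k)`. -/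
def canSq (k : ℕ) (i j : ℤ) : Set (ℝ × ℝ) :=
  Set.Ico ((i : ℝ) / 2 ^ k) (((i : ℝ) + 1) / 2 ^ k) ×ˢ
    Set.Ico ((j : ℝ) / 2 ^ k) (((j : ℝ) + 1) / 2 ^ k)

/-- `σ` is a canonical square of side length `2⁻ᵏ`: it has the form
`[i/2^k, (i+1)/2^k) × [j/2^k, (j+1)/2^k)` with `0 ≤ i, j < 2^k`
(so it is contained in the unit square). -/
def IsCanSqSide (k : ℕ) (σ : Set (ℝ × ℝ)) : Prop :=
  ∃ i j : ℤ, 0 ≤ i ∧ i < 2 ^ k ∧ 0 ≤ j ∧ j < 2 ^ k ∧ σ = canSq k i j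

/-- `σ` is a canonical square. -/
def IsCanSq (σ : Set (ℝ × ℝ)) : Prop := ∃ k : ℕ, IsCanSqSide k σ

/-- `q` is one of the four quadrants of the canonical square `σ`: if `σ` has side
length `2⁻ᵏ`, the quadrants are the canonical squares of side length `2⁻⁽ᵏ⁺¹⁾`
contained in `σ`. -/
def IsQuadrantOf (q σ : Set (ℝ × ℝ)) : Prop :=
  ∃ k : ℕ, IsCanSqSide k σ ∧ IsCanSqSide (k + 1) q ∧ q ⊆ σ

/-- `σ` is the smallest canonical square containing `S`: it is a canonical square,
it contains `S`, and it is contained in every canonical square containing `S`. -/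
def IsSmallestCanSq (S σ : Set (ℝ × ℝ)) : Prop :=
  IsCanSq σ ∧ S ⊆ σ ∧ ∀ τ : Set (ℝ × ℝ), IsCanSq τ → S ⊆ τ → σ ⊆ τ

open scoped Classical

/-- `smallestCanSq S`: the smallest canonical square containing `S` (junk value `∅` if none exists). -/
noncomputable def smallestCanSq (S : Set (ℝ × ℝ)) : Set (ℝ × ℝ) :=
  if h : ∃ σ : Set (ℝ × ℝ), IsSmallestCanSq S σ then h.choose else ∅

/-- A canonical square `σ` is critical for `P` if at least two of its four
quadrants contain a point of `P`. -/
def Critical (P σ : Set (ℝ × ℝ)) : Prop :=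
  IsCanSq σ ∧ ∃ q₁ q₂ : Set (ℝ × ℝ), IsQuadrantOf q₁ σ ∧ IsQuadrantOf q₂ σ ∧
    q₁ ≠ q₂ ∧ (P ∩ q₁).Nonempty ∧ (P ∩ q₂).Nonempty

/-- The tiles of the compressed quadtree map `QT(P)`: (i) `U` itself if `|P| ≤ 1`;
(ii) the annulus `U \ sq(P)` if `|P| ≥ 2` and `sq(P) ≠ U`; (iii) for every
canonical square `σ` critical for `P` and every quadrant `q` of `σ`: the square
`q` if `|P ∩ q| ≤ 1`, and the annulus `q \ sq(P ∩ q)` if `|P ∩ q| ≥ 2` and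
`sq(P ∩ q) ≠ q`. -/
noncomputable def QT (P : Set (ℝ × ℝ)) : Set (Set (ℝ × ℝ)) :=
  {f | (P.ncard ≤ 1 ∧ f = unitSq)
    ∨ (2 ≤ P.ncard ∧ smallestCanSq P ≠ unitSq ∧ f = unitSq \ smallestCanSq P)
    ∨ (∃ σ q : Set (ℝ × ℝ), Critical P σ ∧ IsQuadrantOf q σ ∧
        (((P ∩ q).ncard ≤ 1 ∧ f = q)
          ∨ (2 ≤ (P ∩ q).ncard ∧ smallestCanSq (P ∩ q) ≠ q ∧ f = q \ smallestCanSq (P ∩ q))))}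

/-- `P_j = {π(1), …, π(j)}`: the set of the first `j` points of `P` in the
random order `π : {1, …, n} → P` (modelled as `π : Fin n ≃ P`, with index
`t : Fin n` corresponding to position `t + 1`). -/
def prefixSet (n : ℕ) (P : Finset (ℝ × ℝ)) (π : Fin n ≃ {x // x ∈ P}) (j : ℕ) :
    Set (ℝ × ℝ) :=
  {x : ℝ × ℝ | ∃ t : Fin n, (t : ℕ) < j ∧ ((π t : {x // x ∈ P}) : ℝ × ℝ) = x}

/-! Backwards analysis. Given the set `P_i`, the point `π(i)` whose removal yields `P_{i-1}` is
equally likely to be each of the `i` points of `P_i`, so it suffices that a tile `f` of `QT(S)`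
survives the removal of all but at most four points of `S`. If `f` hangs off a critical square
`σ`, removing a point keeps `σ` critical unless it is one of two witnesses; if `f` is an annulus
`q \ sq(T)`, it also survives unless the removal shrinks `sq(T)` or leaves fewer than two points
in `T`, and laminarity of canonical squares lets at most two points of `T` do that. -/

lemma mem_Ico_dyadic_iff {x : ℝ} {k : ℕ} {i : ℤ} :
    x ∈ Set.Ico ((i : ℝ) / 2 ^ k) (((i : ℝ) + 1) / 2 ^ k) ↔ ⌊x * 2 ^ k⌋ = i := by
  rw [Int.floor_eq_iff, Set.mem_Ico, div_le_iff₀ (by positivity), lt_div_iff₀ (by positivity)]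

lemma floor_mul_two_pow_of_le {k l : ℕ} (hkl : k ≤ l) (x : ℝ) :
    ⌊x * 2 ^ k⌋ = ⌊x * 2 ^ l⌋ / 2 ^ (l - k) := by
  have hx : x * 2 ^ k = x * 2 ^ l / ((2 ^ (l - k) : ℕ) : ℝ) := by
    rw [Nat.cast_pow, Nat.cast_ofNat, eq_div_iff (by positivity), mul_assoc, ← pow_add,
      Nat.add_sub_cancel' hkl]
  rw [hx, Int.floor_div_natCast]
  norm_cast

lemma mem_canSq_iff {k : ℕ} {i j : ℤ} {p : ℝ × ℝ} :
    p ∈ canSq k i j ↔ ⌊p.1 * 2 ^ k⌋ = i ∧ ⌊p.2 * 2 ^ k⌋ = j := by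
  simp only [canSq, Set.mem_prod, mem_Ico_dyadic_iff]

lemma canSq_subset_canSq_of_le {k l : ℕ} {i j i' j' : ℤ} (hkl : k ≤ l)
    (hne : (canSq k i j ∩ canSq l i' j').Nonempty) : canSq l i' j' ⊆ canSq k i j := by
  obtain ⟨p, hp, hp'⟩ := hne
  intro y hy
  rw [mem_canSq_iff] at hp hp' hy ⊢
  rw [floor_mul_two_pow_of_le hkl, floor_mul_two_pow_of_le hkl, hy.1, hy.2, ← hp'.1, ← hp'.2,
    ← floor_mul_two_pow_of_le hkl, ← floor_mul_two_pow_of_le hkl]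
  exact hp

lemma IsCanSqSide.subset_of_le {k l : ℕ} {σ τ : Set (ℝ × ℝ)} (hσ : IsCanSqSide k σ)
    (hτ : IsCanSqSide l τ) (hkl : k ≤ l) (hne : (σ ∩ τ).Nonempty) : τ ⊆ σ := by
  obtain ⟨i, j, -, -, -, -, rfl⟩ := hσ
  obtain ⟨i', j', -, -, -, -, rfl⟩ := hτ
  exact canSq_subset_canSq_of_le hkl hne

lemma IsCanSq.subset_or_subset {σ τ : Set (ℝ × ℝ)} (hσ : IsCanSq σ) (hτ : IsCanSq τ)
    (hne : (σ ∩ τ).Nonempty) : σ ⊆ τ ∨ τ ⊆ σ := by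
  obtain ⟨k, hσ⟩ := hσ
  obtain ⟨l, hτ⟩ := hτ
  rcases le_total k l with hkl | hlk
  · exact Or.inr (hσ.subset_of_le hτ hkl hne)
  · exact Or.inl (hτ.subset_of_le hσ hlk (Set.inter_comm σ τ ▸ hne))

lemma isCanSqSide_zero_unitSq : IsCanSqSide 0 unitSq :=
  ⟨0, 0, le_rfl, by norm_num, le_rfl, by norm_num, by simp [unitSq, canSq]⟩

lemma exists_floor_mul_two_pow_ne {a b : ℝ} (hab : a ≠ b) :
    ∃ N : ℕ, ∀ k, N ≤ k → ⌊a * 2 ^ k⌋ ≠ ⌊b * 2 ^ k⌋ := by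
  have hpos : 0 < |a - b| := abs_pos.mpr (sub_ne_zero.mpr hab)
  obtain ⟨N, hN⟩ := pow_unbounded_of_one_lt (|a - b|⁻¹) (by norm_num : (1 : ℝ) < 2)
  refine ⟨N, fun k hk heq => ?_⟩
  have hlt := Int.abs_sub_lt_one_of_floor_eq_floor heq
  rw [← sub_mul, abs_mul, abs_of_pos (by positivity : (0 : ℝ) < 2 ^ k)] at hlt
  have hNk : (2 : ℝ) ^ N ≤ 2 ^ k := pow_le_pow_right₀ (by norm_num) hk
  rw [inv_lt_iff_one_lt_mul₀' hpos] at hN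
  linarith [mul_le_mul_of_nonneg_left hNk hpos.le]

lemma exists_bound_of_mem_canSq {p q : ℝ × ℝ} (hpq : p ≠ q) :
    ∃ N : ℕ, ∀ k i j, p ∈ canSq k i j → q ∈ canSq k i j → k < N := by
  rcases eq_or_ne p.1 q.1 with h1 | h1
  · have h2 : p.2 ≠ q.2 := fun h2 => hpq (Prod.ext h1 h2)
    obtain ⟨N, hN⟩ := exists_floor_mul_two_pow_ne h2
    refine ⟨N, fun k i j hp hq => not_le.mp fun hk => hN k hk ?_⟩
    rw [mem_canSq_iff] at hp hq
    rw [hp.2, hq.2]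
  · obtain ⟨N, hN⟩ := exists_floor_mul_two_pow_ne h1
    refine ⟨N, fun k i j hp hq => not_le.mp fun hk => hN k hk ?_⟩
    rw [mem_canSq_iff] at hp hq
    rw [hp.1, hq.1]

lemma exists_isSmallestCanSq {T : Set (ℝ × ℝ)} (hTU : T ⊆ unitSq) {p q : ℝ × ℝ}
    (hp : p ∈ T) (hq : q ∈ T) (hpq : p ≠ q) : ∃ σ, IsSmallestCanSq T σ := by
  set D : Set ℕ := {k | ∃ σ, IsCanSqSide k σ ∧ T ⊆ σ}
  obtain ⟨N, hN⟩ := exists_bound_of_mem_canSq hpq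
  have hbdd : BddAbove D := by
    refine ⟨N, ?_⟩
    rintro k ⟨σ, ⟨i, j, -, -, -, -, rfl⟩, hTσ⟩
    exact (hN k i j (hTσ hp) (hTσ hq)).le
  have hD : D.Nonempty := ⟨0, unitSq, isCanSqSide_zero_unitSq, hTU⟩
  obtain ⟨σ, hσ, hTσ⟩ := Nat.sSup_mem hD hbdd
  refine ⟨σ, ⟨_, hσ⟩, hTσ, fun τ ⟨l, hτ⟩ hTτ => ?_⟩
  exact hτ.subset_of_le hσ (le_csSup hbdd ⟨τ, hτ, hTτ⟩) ⟨p, hTτ hp, hTσ hp⟩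

lemma IsSmallestCanSq.smallestCanSq_eq {T σ : Set (ℝ × ℝ)} (h : IsSmallestCanSq T σ) :
    smallestCanSq T = σ := by
  have hex : ∃ σ, IsSmallestCanSq T σ := ⟨σ, h⟩
  rw [smallestCanSq, dif_pos hex]
  exact (hex.choose_spec.2.2 σ h.1 h.2.1).antisymm (h.2.2 _ hex.choose_spec.1 hex.choose_spec.2.1)

lemma isSmallestCanSq_smallestCanSq {T : Set (ℝ × ℝ)} (hTU : T ⊆ unitSq)
    (hT : 2 ≤ T.ncard) : IsSmallestCanSq T (smallestCanSq T) := by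
  obtain ⟨p, hp, q, hq, hpq⟩ := (Set.one_lt_ncard (Set.finite_of_ncard_pos (by omega))).mp hT
  obtain ⟨σ, hσ⟩ := exists_isSmallestCanSq hTU hp hq hpq
  rwa [hσ.smallestCanSq_eq]

lemma IsSmallestCanSq.of_diff_singleton {T τ : Set (ℝ × ℝ)} {y : ℝ × ℝ}
    (h : IsSmallestCanSq (T \ {y}) τ) (hy : y ∈ τ) : IsSmallestCanSq T τ := by
  refine ⟨h.1, fun w hw => ?_,
    fun τ' hτ' hTτ' => h.2.2 τ' hτ' (Set.sdiff_subset.trans hTτ')⟩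
  by_cases hwy : w = y
  · exact hwy ▸ hy
  · exact h.2.1 ⟨hw, hwy⟩

def KeepsSmallestCanSq (T : Set (ℝ × ℝ)) (x : ℝ × ℝ) : Prop :=
  2 ≤ (T \ {x}).ncard ∧ smallestCanSq (T \ {x}) = smallestCanSq T

/-- Two points whose removal each changes `sq(T)` have nested smallest squares for the
remaining sets, since both contain a third point; the larger one then contains all of `T`. -/
lemma subsingleton_setOf_smallestCanSq_diff_singleton_ne {T : Set (ℝ × ℝ)} (hTU : T ⊆ unitSq)
    (hT : 3 ≤ T.ncard) :
    {x ∈ T | smallestCanSq (T \ {x}) ≠ smallestCanSq T}.Subsingleton := by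
  have hsq : ∀ x, IsSmallestCanSq (T \ {x}) (smallestCanSq (T \ {x})) := fun x =>
    isSmallestCanSq_smallestCanSq (Set.sdiff_subset.trans hTU)
      (by have := Set.pred_ncard_le_ncard_sdiff_singleton T x; omega)
  have key : ∀ x y, x ≠ y → y ∈ T →
      smallestCanSq (T \ {x}) ⊆ smallestCanSq (T \ {y}) →
      smallestCanSq (T \ {y}) = smallestCanSq T := fun x y hxy hy hsub =>
    ((hsq y).of_diff_singleton (hsub ((hsq x).2.1 ⟨hy, Ne.symm hxy⟩))).smallestCanSq_eq.symm
  intro x ⟨hx, hxne⟩ y ⟨hy, hyne⟩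
  by_contra hxy
  obtain ⟨z, hzT, hz⟩ : (T \ {x, y}).Nonempty := by
    rw [Set.nonempty_iff_ne_empty, Ne, Set.sdiff_eq_empty]
    intro hsub
    have := (Set.ncard_le_ncard hsub).trans (Set.ncard_insert_le x {y})
    rw [Set.ncard_singleton] at this
    omega
  have hzx : z ≠ x := fun h => hz (Or.inl h)
  have hzy : z ≠ y := fun h => hz (Or.inr h)
  have hzxy : z ∈ smallestCanSq (T \ {x}) ∩ smallestCanSq (T \ {y}) :=
    ⟨(hsq x).2.1 ⟨hzT, hzx⟩, (hsq y).2.1 ⟨hzT, hzy⟩⟩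
  rcases (hsq x).1.subset_or_subset (hsq y).1 ⟨z, hzxy⟩ with hsub | hsub
  · exact hyne (key x y hxy hy hsub)
  · exact hxne (key y x (Ne.symm hxy) hx hsub)

lemma ncard_setOf_not_keepsSmallestCanSq_le_two {T : Set (ℝ × ℝ)} (hTU : T ⊆ unitSq)
    (hT : 2 ≤ T.ncard) : {x ∈ T | ¬KeepsSmallestCanSq T x}.ncard ≤ 2 := by
  have hfin : T.Finite := Set.finite_of_ncard_pos (by omega)
  rcases le_or_gt T.ncard 2 with hle | hlt
  · exact (Set.ncard_le_ncard (Set.sep_subset _ _) hfin).trans hle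
  · have hsub : {x ∈ T | ¬KeepsSmallestCanSq T x} ⊆
        {x ∈ T | smallestCanSq (T \ {x}) ≠ smallestCanSq T} := by
      rintro x ⟨hx, hkeep⟩
      refine ⟨hx, fun heq => hkeep ⟨?_, heq⟩⟩
      rw [Set.ncard_sdiff_singleton_of_mem hx]
      omega
    have hone := (Set.ncard_le_one (hfin.sep _)).mpr fun a ha b hb =>
      subsingleton_setOf_smallestCanSq_diff_singleton_ne hTU hlt ha hb
    exact ((Set.ncard_le_ncard hsub (hfin.sep _)).trans hone).trans one_le_two

lemma Critical.exists_diff_singleton {S σ : Set (ℝ × ℝ)} (h : Critical S σ) :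
    ∃ a b : ℝ × ℝ, ∀ x, x ≠ a → x ≠ b → Critical (S \ {x}) σ := by
  obtain ⟨hσ, q₁, q₂, hq₁, hq₂, hne, ⟨a, haS, haq⟩, ⟨b, hbS, hbq⟩⟩ := h
  exact ⟨a, b, fun x hxa hxb =>
    ⟨hσ, q₁, q₂, hq₁, hq₂, hne, ⟨a, ⟨haS, Ne.symm hxa⟩, haq⟩,
      ⟨b, ⟨hbS, Ne.symm hxb⟩, hbq⟩⟩⟩

lemma ncard_setOf_not_mem_QT_diff_singleton_le_four {S : Set (ℝ × ℝ)} (hSU : S ⊆ unitSq)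
    (hS : S.Finite) {f : Set (ℝ × ℝ)} (hf : f ∈ QT S) :
    {x ∈ S | f ∉ QT (S \ {x})}.ncard ≤ 4 := by
  rcases hf with ⟨h1, -⟩ | ⟨h2, hne, hfe⟩ | ⟨σ, q, hσ, hq, hcase⟩
  · exact (Set.ncard_le_ncard (Set.sep_subset _ _) hS).trans (h1.trans (by norm_num))
  · have hsub : {x ∈ S | f ∉ QT (S \ {x})} ⊆
        {x ∈ S | ¬KeepsSmallestCanSq S x} := by
      rintro x ⟨hx, hbad⟩
      exact ⟨hx, fun ⟨h2x, heq⟩ =>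
        hbad (Or.inr (Or.inl ⟨h2x, heq ▸ hne, heq ▸ hfe⟩))⟩
    exact (Set.ncard_le_ncard hsub (hS.sep _)).trans
      ((ncard_setOf_not_keepsSmallestCanSq_le_two hSU h2).trans (by norm_num))
  · obtain ⟨a, b, hab⟩ := hσ.exists_diff_singleton
    have hpair : ({a, b} : Set (ℝ × ℝ)).ncard ≤ 2 :=
      (Set.ncard_insert_le a {b}).trans (by rw [Set.ncard_singleton])
    rcases hcase with ⟨h1, hfq⟩ | ⟨h2, hne, hfe⟩
    · have hsub : {x ∈ S | f ∉ QT (S \ {x})} ⊆ {a, b} := by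
        rintro x ⟨-, hbad⟩
        by_contra hx
        simp only [Set.mem_insert_iff, Set.mem_singleton_iff, not_or] at hx
        have h1x : ((S \ {x}) ∩ q).ncard ≤ 1 :=
          (Set.ncard_le_ncard (Set.inter_subset_inter_left q Set.sdiff_subset)
            (hS.inter_of_left q)).trans h1
        exact hbad (Or.inr (Or.inr ⟨σ, q, hab x hx.1 hx.2, hq, Or.inl ⟨h1x, hfq⟩⟩))
      exact (Set.ncard_le_ncard hsub (Set.toFinite _)).trans (hpair.trans (by norm_num))
    · set T := S ∩ q with hT
      have hsub : {x ∈ S | f ∉ QT (S \ {x})} ⊆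
          {a, b} ∪ {x ∈ T | ¬KeepsSmallestCanSq T x} := by
        rintro x ⟨-, hbad⟩
        by_contra hx
        simp only [Set.mem_union, Set.mem_insert_iff, Set.mem_singleton_iff, Set.mem_ofPred_eq,
          not_or, not_and, not_not] at hx
        obtain ⟨⟨hxa, hxb⟩, hkeep⟩ := hx
        have hkeep' : KeepsSmallestCanSq T x := by
          by_cases hxT : x ∈ T
          · exact hkeep hxT
          · rw [KeepsSmallestCanSq, Set.sdiff_singleton_eq_self hxT]
            exact ⟨h2, rfl⟩
        refine hbad (Or.inr (Or.inr ⟨σ, q, hab x hxa hxb, hq, Or.inr ?_⟩))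
        rw [Set.inter_sdiff_right_comm.symm, ← hT, hkeep'.2]
        exact ⟨hkeep'.1, hne, hfe⟩
      calc {x ∈ S | f ∉ QT (S \ {x})}.ncard
          ≤ ({a, b} ∪ {x ∈ T | ¬KeepsSmallestCanSq T x}).ncard :=
            Set.ncard_le_ncard hsub ((Set.toFinite _).union ((hS.inter_of_left q).sep _))
        _ ≤ 2 + 2 := (Set.ncard_union_le _ _).trans (add_le_add hpair
            (ncard_setOf_not_keepsSmallestCanSq_le_two (Set.inter_subset_left.trans hSU) h2))

section Prefix

open Finset

variable {n : ℕ} {P : Finset (ℝ × ℝ)}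

lemma prefixSet_subset (π : Fin n ≃ {x // x ∈ P}) (j : ℕ) : prefixSet n P π j ⊆ P := by
  rintro _ ⟨t, -, rfl⟩
  exact (π t).2

lemma prefixSet_eq_diff (π : Fin n ≃ {x // x ∈ P}) (l : Fin n) :
    prefixSet n P π l = prefixSet n P π (l + 1) \ {(π l : ℝ × ℝ)} := by
  ext x
  simp only [prefixSet, Set.mem_sdiff, Set.mem_ofPred_eq, Set.mem_singleton_iff]
  constructor
  · rintro ⟨t, ht, rfl⟩
    refine ⟨⟨t, by omega, rfl⟩, fun h => ?_⟩
    rw [π.injective (Subtype.coe_injective h)] at ht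
    exact lt_irrefl _ ht
  · rintro ⟨⟨t, ht, rfl⟩, hne⟩
    refine ⟨t, lt_of_le_of_ne (Nat.lt_succ_iff.mp ht) fun h => hne ?_, rfl⟩
    rw [Fin.ext h]

lemma prefixSet_swap_trans (π : Fin n ≃ {x // x ∈ P}) {j : ℕ} {t l : Fin n}
    (ht : (t : ℕ) < j) (hl : (l : ℕ) < j) :
    prefixSet n P ((Equiv.swap t l).trans π) j = prefixSet n P π j := by
  have hswap : ∀ s : Fin n, (s : ℕ) < j → ((Equiv.swap t l s : Fin n) : ℕ) < j := by
    intro s hs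
    rw [Equiv.swap_apply_def]
    split_ifs <;> assumption
  ext x
  simp only [prefixSet, Set.mem_ofPred_eq, Equiv.trans_apply]
  constructor
  · rintro ⟨s, hs, rfl⟩
    exact ⟨Equiv.swap t l s, hswap s hs, rfl⟩
  · rintro ⟨s, hs, rfl⟩
    exact ⟨Equiv.swap t l s, hswap s hs, by rw [Equiv.swap_apply_self]⟩

/-- Precomposing with the transposition of positions `t` and `l` fixes `P_j` and exchanges
the points at these positions. -/
lemma card_filter_not_prefixSet_diff_eq (A : Set (ℝ × ℝ) → Prop) {j : ℕ} {t l : Fin n}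
    (ht : (t : ℕ) < j) (hl : (l : ℕ) < j) :
    #{π : Fin n ≃ {x // x ∈ P} | A (prefixSet n P π j) ∧
        ¬A (prefixSet n P π j \ {(π t : ℝ × ℝ)})} =
      #{π : Fin n ≃ {x // x ∈ P} | A (prefixSet n P π j) ∧
        ¬A (prefixSet n P π j \ {(π l : ℝ × ℝ)})} := by
  refine card_nbij' (fun π => (Equiv.swap t l).trans π) (fun π => (Equiv.swap t l).trans π)
    ?_ ?_ ?_ ?_
  · intro π hπ
    simpa [prefixSet_swap_trans π ht hl] using hπ
  · intro π hπ
    simpa [prefixSet_swap_trans π ht hl] using hπ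
  · exact fun π _ => Equiv.ext fun s => by simp
  · exact fun π _ => Equiv.ext fun s => by simp

lemma card_filter_Iic_eq_ncard (A : Set (ℝ × ℝ) → Prop) (π : Fin n ≃ {x // x ∈ P})
    (l : Fin n) :
    #{t ∈ Iic l | ¬A (prefixSet n P π (l + 1) \ {(π t : ℝ × ℝ)})} =
      {x ∈ prefixSet n P π (l + 1) | ¬A (prefixSet n P π (l + 1) \ {x})}.ncard := by
  rw [← Set.ncard_coe_finset,
    ← Set.ncard_image_of_injective _ (Subtype.coe_injective.comp π.injective)]
  congr 1
  apply Set.ext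
  intro x
  simp only [coe_filter, mem_Iic, Set.mem_image, Set.mem_ofPred_eq, Function.comp_apply,
    prefixSet, Fin.le_iff_val_le_val, Nat.lt_succ_iff]
  constructor
  · rintro ⟨t, ⟨htl, hA⟩, rfl⟩
    exact ⟨⟨t, htl, rfl⟩, hA⟩
  · rintro ⟨⟨t, htl, rfl⟩, hA⟩
    exact ⟨t, ⟨htl, hA⟩, rfl⟩

theorem card_mul_le_of_ncard_setOf_not_diff_singleton_le (A : Set (ℝ × ℝ) → Prop) (k : ℕ)
    (hA : ∀ S ⊆ (P : Set (ℝ × ℝ)), A S → {x ∈ S | ¬A (S \ {x})}.ncard ≤ k)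
    (l : Fin n) :
    ((l : ℕ) + 1) * #{π : Fin n ≃ {x // x ∈ P} | A (prefixSet n P π (l + 1)) ∧
        ¬A (prefixSet n P π l)} ≤
      k * #{π : Fin n ≃ {x // x ∈ P} | A (prefixSet n P π (l + 1))} := by
  set Q := fun π : Fin n ≃ {x // x ∈ P} => prefixSet n P π (l + 1)
  set TA := univ.filter fun π => A (Q π)
  have hposition : ∀ t ∈ Iic l,
      #{π : Fin n ≃ {x // x ∈ P} | A (Q π) ∧ ¬A (prefixSet n P π l)} =
        #{π ∈ TA | ¬A (Q π \ {(π t : ℝ × ℝ)})} := by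
    intro t ht
    rw [filter_filter, card_filter_not_prefixSet_diff_eq A
      (Nat.lt_succ_of_le (Fin.le_iff_val_le_val.mp (mem_Iic.mp ht))) (Nat.lt_succ_self l)]
    simp only [prefixSet_eq_diff, Q]
  calc ((l : ℕ) + 1) * #{π : Fin n ≃ {x // x ∈ P} | A (Q π) ∧ ¬A (prefixSet n P π l)}
      = ∑ t ∈ Iic l, #{π ∈ TA | ¬A (Q π \ {(π t : ℝ × ℝ)})} := by
        rw [← sum_congr rfl hposition, sum_const, Fin.card_Iic, smul_eq_mul]
    _ = ∑ π ∈ TA, #{t ∈ Iic l | ¬A (Q π \ {(π t : ℝ × ℝ)})} :=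
        sum_card_bipartiteAbove_eq_sum_card_bipartiteBelow _
    _ ≤ ∑ _π ∈ TA, k := sum_le_sum fun π hπ =>
        (card_filter_Iic_eq_ncard A π l).trans_le
          (hA _ (prefixSet_subset π _) (mem_filter.mp hπ).2)
    _ = k * #TA := by rw [sum_const, smul_eq_mul, mul_comm]

end Prefix

theorem prob_tile_created_general (n : ℕ) (P : Finset (ℝ × ℝ))
    (hPU : ∀ x ∈ P, x ∈ unitSq) (f : Set (ℝ × ℝ)) (i : ℕ) (hi1 : 1 ≤ i) (hin : i ≤ n) :
    (((Finset.univ : Finset (Fin n ≃ {x // x ∈ P})).filter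
          (fun π => f ∈ QT (prefixSet n P π i) ∧ f ∉ QT (prefixSet n P π (i - 1)))).card : ℝ)
        / (((Finset.univ : Finset (Fin n ≃ {x // x ∈ P})).card : ℝ))
      ≤ (4 / (i : ℝ)) *
        ((((Finset.univ : Finset (Fin n ≃ {x // x ∈ P})).filter
              (fun π => f ∈ QT (prefixSet n P π i))).card : ℝ)
          / (((Finset.univ : Finset (Fin n ≃ {x // x ∈ P})).card : ℝ))) := by
  obtain ⟨l, rfl⟩ : ∃ l : Fin n, i = l + 1 :=
    ⟨⟨i - 1, by omega⟩, (Nat.sub_add_cancel hi1).symm⟩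
  have hcount := card_mul_le_of_ncard_setOf_not_diff_singleton_le (fun S => f ∈ QT S) 4
    (fun S hS hf => ncard_setOf_not_mem_QT_diff_singleton_le_four (hS.trans hPU)
      (P.finite_toSet.subset hS) hf) l
  rw [Nat.add_sub_cancel, ← mul_div_assoc]
  refine div_le_div_of_nonneg_right ?_ (Nat.cast_nonneg _)
  rw [div_mul_eq_mul_div, le_div_iff₀ (by positivity), mul_comm]
  exact_mod_cast hcount

/-- Probability that a tile is created in the `i`-th iteration: for a uniformly
random bijection `π : {1, …, n} → P` and `P_j = {π(1), …, π(j)}`,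
`Pr[f ∈ QT(P_i) ∧ f ∉ QT(P_{i-1})] ≤ (4 / i) · Pr[f ∈ QT(P_i)]`. -/
theorem prob_tile_created (n : ℕ) (P : Finset (ℝ × ℝ)) (hcard : P.card = n)
    (hPU : ∀ x ∈ P, x ∈ unitSq) (f : Set (ℝ × ℝ)) (i : ℕ) (hi1 : 1 ≤ i) (hin : i ≤ n) :
    (((Finset.univ : Finset (Fin n ≃ {x // x ∈ P})).filter
          (fun π => f ∈ QT (prefixSet n P π i) ∧ f ∉ QT (prefixSet n P π (i - 1)))).card : ℝ)
        / (((Finset.univ : Finset (Fin n ≃ {x // x ∈ P})).card : ℝ))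
      ≤ (4 / (i : ℝ)) *
        ((((Finset.univ : Finset (Fin n ≃ {x // x ∈ P})).filter
              (fun π => f ∈ QT (prefixSet n P π i))).card : ℝ)
          / (((Finset.univ : Finset (Fin n ≃ {x // x ∈ P})).card : ℝ))) :=
  prob_tile_created_general n P hPU f i hi1 hin
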